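/- arXiv:2509.15087 — 5 statements merged into one kernel-verified Lean document; each statement's English description precedes it below -/
import Mathlib

section
/- Let f : E → ℝ be differentiable with gradient ∇f, μ-smooth and λ-strongly convex with 0 < λ and 0 < μ, and let θ* be a global minimizer of f. Then for every step size η with 0 < η ≤ 2/μ and every point θ ∈ E, the gradient-descent step θ' = θ − η·∇f(θ) satisfies f(θ') − f(θ*) ≤ (1 − 2ηλ·(1 − μη/2))·(f(θ) − f(θ*)). -/
open RealInnerProductSpace

section aux

variable {E : Type*} [NormedAddCommGroup E] [InnerProductSpace ℝ E] [CompleteSpace E]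

/-- Descent lemma: a function with `μ`-Lipschitz gradient admits a quadratic upper bound. -/
lemma descent_lemma_aux (f : E → ℝ) (f' : E → E) (μ : ℝ)
    (hdiff : ∀ x, HasGradientAt f (f' x) x)
    (hsmooth : ∀ x y, ‖f' x - f' y‖ ≤ μ * ‖x - y‖) (x y : E) :
    f y ≤ f x + ⟪f' x, y - x⟫ + μ / 2 * ‖y - x‖ ^ 2 := by
  set v := y - x with hv
  set g : ℝ → ℝ := fun t => f (x + t • v) - t * ⟪f' x, v⟫ - μ / 2 * t ^ 2 * ‖v‖ ^ 2 with hg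
  have hderiv : ∀ t : ℝ, HasDerivAt g
      (⟪f' (x + t • v) - f' x, v⟫ - μ * t * ‖v‖ ^ 2) t := by
    intro t
    have hline : HasDerivAt (fun t : ℝ => x + t • v) v t := by
      simpa using ((hasDerivAt_id t).smul_const v).const_add x
    have h1 : HasDerivAt (fun t : ℝ => f (x + t • v)) ⟪f' (x + t • v), v⟫ t := by
      have := ((hdiff (x + t • v)).hasFDerivAt.comp_hasDerivAt t hline)
      simp at this
      exact this
    have h2 : HasDerivAt (fun t : ℝ => t * ⟪f' x, v⟫) ⟪f' x, v⟫ t := by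
      simpa using (hasDerivAt_id t).mul_const (⟪f' x, v⟫ : ℝ)
    have h3 : HasDerivAt (fun t : ℝ => μ / 2 * t ^ 2 * ‖v‖ ^ 2) (μ * t * ‖v‖ ^ 2) t := by
      have h := ((hasDerivAt_pow 2 t).const_mul (μ / 2)).mul_const (‖v‖ ^ 2)
      refine h.congr_deriv ?_
      push_cast
      ring
    have := (h1.sub h2).sub h3
    refine this.congr_deriv ?_
    rw [inner_sub_left]
  have hanti : AntitoneOn g (Set.Icc (0 : ℝ) 1) := by
    apply antitoneOn_of_deriv_nonpos (convex_Icc 0 1)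
    · exact fun t _ => ((hderiv t).continuousAt).continuousWithinAt
    · exact fun t _ => ((hderiv t).differentiableAt).differentiableWithinAt
    · intro t ht
      rw [interior_Icc] at ht
      rw [(hderiv t).deriv]
      have h1 : ⟪f' (x + t • v) - f' x, v⟫ ≤ ‖f' (x + t • v) - f' x‖ * ‖v‖ :=
        real_inner_le_norm _ _
      have h2 : ‖f' (x + t • v) - f' x‖ ≤ μ * (t * ‖v‖) := by
        have := hsmooth (x + t • v) x
        rwa [add_sub_cancel_left, norm_smul, Real.norm_eq_abs, abs_of_pos ht.1] at this
      have h4 : ‖f' (x + t • v) - f' x‖ * ‖v‖ ≤ μ * (t * ‖v‖) * ‖v‖ :=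
        mul_le_mul_of_nonneg_right h2 (norm_nonneg v)
      have h5 : μ * (t * ‖v‖) * ‖v‖ = μ * t * ‖v‖ ^ 2 := by ring
      linarith
  have h01 := hanti (Set.left_mem_Icc.2 zero_le_one) (Set.right_mem_Icc.2 zero_le_one)
    zero_le_one
  simp only [hg, zero_smul, add_zero, one_smul, zero_mul, zero_pow, mul_zero, sub_zero,
    one_pow, mul_one] at h01
  have hxy : x + v = y := by rw [hv]; abel
  rw [hxy] at h01
  linarith

end aux

/-- **One-step contraction of gradient descent.** If `f` is `μ`-smooth and `λ`-strongly
convex with global minimizer `θ*`, then for any step size `0 < η ≤ 2/μ`, the gradient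
descent step satisfies
`f (θ - η • f' θ) - f θ* ≤ (1 - 2ηλ(1 - μη/2)) * (f θ - f θ*)`. -/
theorem gradient_descent_one_step_contraction
    {E : Type*} [NormedAddCommGroup E] [InnerProductSpace ℝ E] [CompleteSpace E]
    (f : E → ℝ) (f' : E → E) (μ lam : ℝ) (hlam : 0 < lam) (hμ : 0 < μ)
    (hdiff : ∀ x, HasGradientAt f (f' x) x)
    (hsmooth : ∀ x y, ‖f' x - f' y‖ ≤ μ * ‖x - y‖)
    (hsc : ∀ x y, f y ≥ f x + ⟪f' x, y - x⟫ + lam / 2 * ‖y - x‖ ^ 2)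
    (θstar : E) (hmin : ∀ θ, f θstar ≤ f θ) :
    ∀ (η : ℝ), 0 < η → η ≤ 2 / μ → ∀ θ : E,
      f (θ - η • f' θ) - f θstar ≤
        (1 - 2 * η * lam * (1 - μ * η / 2)) * (f θ - f θstar) := by
  intro η hη hη2 θ
  -- PL inequality
  have hPL : 2 * lam * (f θ - f θstar) ≤ ‖f' θ‖ ^ 2 := by
    have h1 := hsc θ θstar
    set d := θstar - θ with hd
    have hsq : (0 : ℝ) ≤ ‖d + lam⁻¹ • f' θ‖ ^ 2 := sq_nonneg _
    have hexp : ‖d + lam⁻¹ • f' θ‖ ^ 2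
        = ‖d‖ ^ 2 + 2 * (lam⁻¹ * ⟪f' θ, d⟫) + lam⁻¹ ^ 2 * ‖f' θ‖ ^ 2 := by
      rw [@norm_add_sq_real, real_inner_smul_right, norm_smul, mul_pow]
      simp [Real.norm_eq_abs, sq_abs, real_inner_comm]
    rw [hexp] at hsq
    have h5 : lam * (‖d‖ ^ 2 + 2 * (lam⁻¹ * ⟪f' θ, d⟫) + lam⁻¹ ^ 2 * ‖f' θ‖ ^ 2)
        = lam * ‖d‖ ^ 2 + 2 * ⟪f' θ, d⟫ + lam⁻¹ * ‖f' θ‖ ^ 2 := by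
      field_simp
    have hsq' : (0 : ℝ) ≤ lam * ‖d‖ ^ 2 + 2 * ⟪f' θ, d⟫ + lam⁻¹ * ‖f' θ‖ ^ 2 := by
      rw [← h5]; exact mul_nonneg hlam.le hsq
    have h6 : 2 * (f θ - f θstar) ≤ lam⁻¹ * ‖f' θ‖ ^ 2 := by linarith
    calc 2 * lam * (f θ - f θstar) = lam * (2 * (f θ - f θstar)) := by ring
      _ ≤ lam * (lam⁻¹ * ‖f' θ‖ ^ 2) := mul_le_mul_of_nonneg_left h6 hlam.le
      _ = ‖f' θ‖ ^ 2 := by field_simp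
  -- Descent lemma at the GD step
  have hdesc := descent_lemma_aux f f' μ hdiff hsmooth θ (θ - η • f' θ)
  have hsub : θ - η • f' θ - θ = (-η) • f' θ := by
    rw [neg_smul]; abel
  rw [hsub] at hdesc
  have hin : ⟪f' θ, (-η) • f' θ⟫ = -η * ‖f' θ‖ ^ 2 := by
    rw [real_inner_smul_right, real_inner_self_eq_norm_sq]
  have hnrm : ‖(-η) • f' θ‖ ^ 2 = η ^ 2 * ‖f' θ‖ ^ 2 := by
    rw [norm_smul, mul_pow, Real.norm_eq_abs, sq_abs]
    ring
  rw [hin, hnrm] at hdesc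
  -- step size condition
  have hμη : η * μ ≤ 2 := (le_div_iff₀ hμ).mp hη2
  have hcoef : 0 ≤ η * (1 - μ * η / 2) := by
    apply mul_nonneg hη.le; nlinarith
  have hgap : 0 ≤ f θ - f θstar := by linarith [hmin θ]
  nlinarith [mul_le_mul_of_nonneg_left hPL hcoef]
end

section
/- Let f : E → ℝ be differentiable with gradient ∇f, μ-smooth and λ-strongly convex with 0 < λ ≤ μ, and let θ* be a global minimizer of f. Fix a step size η with 0 < η < 2/μ, set ρ = 1 − 2ηλ·(1 − μη/2), and let (θ^s) be the gradient descent iterates θ^{s+1} = θ^s − η·∇f(θ^s) started from any θ^0 ∈ E. Then for every s ≥ 0, f(θ^s) − f(θ*) ≤ ρ^s·(f(θ^0) − f(θ*)). -/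
open RealInnerProductSpace

lemma descent_aux
    {E : Type*} [NormedAddCommGroup E] [InnerProductSpace ℝ E] [CompleteSpace E]
    (f : E → ℝ) (f' : E → E) (μ : ℝ)
    (hdiff : ∀ x, HasGradientAt f (f' x) x)
    (hsmooth : ∀ x y, ‖f' x - f' y‖ ≤ μ * ‖x - y‖)
    (x y : E) : f y ≤ f x + ⟪f' x, y - x⟫ + μ / 2 * ‖y - x‖ ^ 2 := by
  set d := y - x with hd
  set g : ℝ → ℝ := fun t => f (x + t • d) - t * ⟪f' x, d⟫ - μ * t ^ 2 / 2 * ‖d‖ ^ 2 with hg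
  have hline : ∀ t : ℝ, HasDerivAt (fun t : ℝ => x + t • d) d t := by
    intro t
    simpa using ((hasDerivAt_id t).smul_const d).const_add x
  have hgd : ∀ t : ℝ, HasDerivAt g (⟪f' (x + t • d), d⟫ - ⟪f' x, d⟫ - μ * t * ‖d‖ ^ 2) t := by
    intro t
    have h1 : HasDerivAt (fun t : ℝ => f (x + t • d)) ⟪f' (x + t • d), d⟫ t := by
      have := (hdiff (x + t • d)).hasFDerivAt.comp_hasDerivAt t (hline t)
      have h := this
      simp at h
      exact h
    have h2 : HasDerivAt (fun t : ℝ => t * ⟪f' x, d⟫) ⟪f' x, d⟫ t := by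
      simpa using (hasDerivAt_id t).mul_const (⟪f' x, d⟫)
    have h3 : HasDerivAt (fun t : ℝ => μ * t ^ 2 / 2 * ‖d‖ ^ 2) (μ * t * ‖d‖ ^ 2) t := by
      have := (((hasDerivAt_pow 2 t).const_mul μ).div_const 2).mul_const (‖d‖ ^ 2)
      convert this using 1
      · rfl
      · rfl
      · push_cast; ring
    have h := (h1.sub h2).sub h3
    exact h
  have hmono : AntitoneOn g (Set.Icc 0 1) := by
    apply antitoneOn_of_hasDerivWithinAt_nonpos (convex_Icc 0 1)
      (fun t _ => (hgd t).continuousAt.continuousWithinAt)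
      (fun t ht => (hgd t).hasDerivWithinAt)
    intro t ht
    rw [interior_Icc] at ht
    have hb : ⟪f' (x + t • d) - f' x, d⟫ ≤ μ * t * ‖d‖ ^ 2 := by
      calc ⟪f' (x + t • d) - f' x, d⟫ ≤ ‖f' (x + t • d) - f' x‖ * ‖d‖ :=
            real_inner_le_norm _ _
        _ ≤ (μ * ‖(x + t • d) - x‖) * ‖d‖ := by
            gcongr; exact hsmooth _ _
        _ = μ * (|t| * ‖d‖) * ‖d‖ := by
            rw [add_sub_cancel_left, norm_smul, Real.norm_eq_abs]
        _ = μ * t * ‖d‖ ^ 2 := by rw [abs_of_pos ht.1]; ring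
    have : ⟪f' (x + t • d) - f' x, d⟫ = ⟪f' (x + t • d), d⟫ - ⟪f' x, d⟫ :=
      inner_sub_left _ _ _
    linarith [hb, this.symm.le]
  have h01 := hmono (Set.left_mem_Icc.2 zero_le_one) (Set.right_mem_Icc.2 zero_le_one) zero_le_one
  simp only [hg] at h01
  simp only [zero_smul, add_zero, one_smul] at h01
  have hxy : x + d = y := by rw [hd]; abel
  rw [hxy] at h01
  nlinarith [h01]

/-- **Linear convergence of gradient descent in function value.** If `f` is `μ`-smooth and
`λ`-strongly convex with `0 < λ ≤ μ` and global minimizer `θ*`, and `0 < η < 2/μ`, then the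
gradient descent iterates satisfy `f θ^s - f θ* ≤ ρ^s (f θ^0 - f θ*)` with
`ρ = 1 - 2ηλ(1 - μη/2)`. -/
theorem gradient_descent_linear_convergence
    {E : Type*} [NormedAddCommGroup E] [InnerProductSpace ℝ E] [CompleteSpace E]
    (f : E → ℝ) (f' : E → E) (μ lam : ℝ) (hlam : 0 < lam) (hlamμ : lam ≤ μ)
    (hdiff : ∀ x, HasGradientAt f (f' x) x)
    (hsmooth : ∀ x y, ‖f' x - f' y‖ ≤ μ * ‖x - y‖)
    (hsc : ∀ x y, f y ≥ f x + ⟪f' x, y - x⟫ + lam / 2 * ‖y - x‖ ^ 2)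
    (θstar : E) (hmin : ∀ θ, f θstar ≤ f θ)
    (η : ℝ) (hη : 0 < η) (hη2 : η < 2 / μ)
    (ρ : ℝ) (hρ : ρ = 1 - 2 * η * lam * (1 - μ * η / 2))
    (θseq : ℕ → E) (hiter : ∀ s : ℕ, θseq (s + 1) = θseq s - η • f' (θseq s)) :
    ∀ s : ℕ, f (θseq s) - f θstar ≤ ρ ^ s * (f (θseq 0) - f θstar) := by
  have hμ : 0 < μ := hlam.trans_le hlamμ
  have hμη : μ * η < 2 := by
    have := (lt_div_iff₀ hμ).mp hη2
    linarith
  -- PL inequality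
  have hPL : ∀ x : E, 2 * lam * (f x - f θstar) ≤ ‖f' x‖ ^ 2 := by
    intro x
    have h1 := hsc x θstar
    have h2 : (0:ℝ) ≤ ‖f' x + lam • (θstar - x)‖ ^ 2 := sq_nonneg _
    rw [norm_add_sq_real, norm_smul, real_inner_smul_right, Real.norm_eq_abs,
      abs_of_pos hlam, mul_pow] at h2
    nlinarith [sq_nonneg ‖θstar - x‖, hlam]
  -- one step contraction
  have hstep : ∀ s : ℕ, f (θseq (s+1)) - f θstar ≤ ρ * (f (θseq s) - f θstar) := by
    intro s
    set x := θseq s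
    set gx := f' x
    have hy : θseq (s+1) = x - η • gx := hiter s
    have hdesc := descent_aux f f' μ hdiff hsmooth x (x - η • gx)
    have hsub : x - η • gx - x = -(η • gx) := by abel
    rw [hsub] at hdesc
    have hinner : ⟪gx, -(η • gx)⟫ = -(η * ‖gx‖ ^ 2) := by
      rw [inner_neg_right, real_inner_smul_right, real_inner_self_eq_norm_sq]
    have hnorm : ‖-(η • gx)‖ ^ 2 = η ^ 2 * ‖gx‖ ^ 2 := by
      rw [norm_neg, norm_smul, Real.norm_eq_abs, abs_of_pos hη, mul_pow]
    rw [hinner, hnorm] at hdesc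
    have hcoef : 0 ≤ η * (1 - μ * η / 2) := by
      apply mul_nonneg hη.le; nlinarith
    have hPLx := hPL x
    rw [hy, hρ]
    nlinarith [mul_le_mul_of_nonneg_left hPLx hcoef]
  -- rho nonneg
  have hρ0 : 0 ≤ ρ := by
    rw [hρ]
    nlinarith [mul_pos hη hlam, mul_pos hη hμ, sq_nonneg (μ * η - 1),
      mul_le_mul_of_nonneg_left hlamμ hη.le]
  intro s
  induction s with
  | zero => simp
  | succ n ih =>
    calc f (θseq (n+1)) - f θstar ≤ ρ * (f (θseq n) - f θstar) := hstep n
      _ ≤ ρ * (ρ ^ n * (f (θseq 0) - f θstar)) := by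
          exact mul_le_mul_of_nonneg_left ih hρ0
      _ = ρ ^ (n+1) * (f (θseq 0) - f θstar) := by ring
end

section
/- Let clients be indexed by Fin N and clusters by Fin M with a surjective cluster assignment c : Fin N → Fin M (so every cluster is nonempty), let β ≥ 0 and ε ≥ 0, let each client i have a map φ_i : (Fin M → E) → E satisfying the bounded-expert-sensitivity condition, let θ : ℕ → Fin N → E be client parameter sequences whose local training is ε-accurate, and let Θ^t : Fin M → E be the induced cluster models. Then for every round t ≥ 1 and every cluster j, ‖Θ_j^{t+1} − Θ_j^t‖ ≤ 2ε + β·M·max_{k ∈ Fin M} ‖Θ_k^t − Θ_k^{t−1}‖; equivalently, Δ^t ≤ 2ε + β·M·Δ^{t−1}. -/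
/-- **One-round cluster-model stability bound for FedLEASE.** With a surjective cluster
assignment, bounded expert sensitivity, and `ε`-accurate local training, the cluster models
satisfy `‖Θ_j^{t+1} - Θ_j^t‖ ≤ 2ε + βM·Δ^{t-1}` for every round `t ≥ 1` and every cluster
`j`; equivalently `Δ^t ≤ 2ε + βM·Δ^{t-1}`. -/
theorem fedlease_one_round_bound
    {E : Type*} [NormedAddCommGroup E] [NormedSpace ℝ E]
    (N M : ℕ) (hN : 0 < N) (hM : 0 < M)
    (c : Fin N → Fin M) (hc : Function.Surjective c)
    (β ε : ℝ) (hβ : 0 ≤ β) (hε : 0 ≤ ε)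
    (φ : Fin N → (Fin M → E) → E)
    (hφ : ∀ (i : Fin N) (Θ₁ Θ₂ : Fin M → E),
      ‖φ i Θ₁ - φ i Θ₂‖ ≤ β * ∑ k : Fin M, ‖Θ₁ k - Θ₂ k‖)
    (θ : ℕ → Fin N → E)
    (Θ : ℕ → Fin M → E)
    (hΘ : ∀ (t : ℕ) (j : Fin M),
      Θ t j = (((Finset.univ.filter (fun i => c i = j)).card : ℝ))⁻¹ •
        ∑ i ∈ Finset.univ.filter (fun i => c i = j), θ t i)
    (hacc : ∀ (i : Fin N) (t : ℕ), ‖θ (t + 1) i - φ i (Θ t)‖ ≤ ε)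
    (Δ : ℕ → ℝ)
    (hΔ : ∀ t : ℕ, Δ t = Finset.univ.sup' ⟨⟨0, hM⟩, Finset.mem_univ _⟩
      (fun j : Fin M => ‖Θ (t + 1) j - Θ t j‖)) :
    ∀ t : ℕ, 1 ≤ t →
      (∀ j : Fin M, ‖Θ (t + 1) j - Θ t j‖ ≤ 2 * ε + β * M * Δ (t - 1)) ∧
      Δ t ≤ 2 * ε + β * M * Δ (t - 1) := by

  intro t ht
  obtain ⟨s, rfl⟩ : ∃ s, t = s + 1 := ⟨t - 1, by omega⟩
  simp only [Nat.add_sub_cancel]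
  have hΔs : ∀ k : Fin M, ‖Θ (s + 1) k - Θ s k‖ ≤ Δ s := by
    intro k
    rw [hΔ s]
    exact Finset.le_sup' (fun j : Fin M => ‖Θ (s + 1) j - Θ s j‖) (Finset.mem_univ k)
  have hsum : ∑ k : Fin M, ‖Θ (s + 1) k - Θ s k‖ ≤ (M : ℝ) * Δ s := by
    calc ∑ k : Fin M, ‖Θ (s + 1) k - Θ s k‖ ≤ ∑ _k : Fin M, Δ s :=
          Finset.sum_le_sum fun k _ => hΔs k
      _ = (M : ℝ) * Δ s := by simp [Finset.sum_const, mul_comm]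
  have hterm : ∀ i : Fin N, ‖θ (s + 2) i - θ (s + 1) i‖ ≤ 2 * ε + β * M * Δ s := by
    intro i
    calc ‖θ (s + 2) i - θ (s + 1) i‖
        ≤ ‖θ (s + 2) i - φ i (Θ (s + 1))‖ + ‖φ i (Θ (s + 1)) - θ (s + 1) i‖ :=
          norm_sub_le_norm_sub_add_norm_sub _ _ _
      _ ≤ ‖θ (s + 2) i - φ i (Θ (s + 1))‖ +
            (‖φ i (Θ (s + 1)) - φ i (Θ s)‖ + ‖φ i (Θ s) - θ (s + 1) i‖) := by
          gcongr
          exact norm_sub_le_norm_sub_add_norm_sub _ _ _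
      _ ≤ ε + (β * ∑ k : Fin M, ‖Θ (s + 1) k - Θ s k‖ + ε) := by
          gcongr
          · exact hacc i (s + 1)
          · exact hφ i _ _
          · rw [norm_sub_rev]; exact hacc i s
      _ ≤ ε + (β * ((M : ℝ) * Δ s) + ε) := by gcongr
      _ = 2 * ε + β * M * Δ s := by ring
  have key : ∀ j : Fin M, ‖Θ (s + 2) j - Θ (s + 1) j‖ ≤ 2 * ε + β * M * Δ s := by
    intro j
    set S := Finset.univ.filter (fun i => c i = j) with hS
    obtain ⟨i₀, hi₀⟩ := hc j
    have hne : S.Nonempty := ⟨i₀, by simp [hS, hi₀]⟩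
    have hcard : (0 : ℝ) < (S.card : ℝ) := by
      exact_mod_cast Finset.card_pos.mpr hne
    have hB : 0 ≤ 2 * ε + β * M * Δ s :=
      le_trans (norm_nonneg _) (hterm i₀)
    rw [hΘ (s + 2) j, hΘ (s + 1) j, ← hS, ← smul_sub, ← Finset.sum_sub_distrib,
      norm_smul, Real.norm_eq_abs, abs_of_nonneg (inv_nonneg.mpr hcard.le)]
    calc ((S.card : ℝ))⁻¹ * ‖∑ i ∈ S, (θ (s + 2) i - θ (s + 1) i)‖
        ≤ ((S.card : ℝ))⁻¹ * ∑ i ∈ S, ‖θ (s + 2) i - θ (s + 1) i‖ := by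
          gcongr
          exact norm_sum_le _ _
      _ ≤ ((S.card : ℝ))⁻¹ * ∑ _i ∈ S, (2 * ε + β * M * Δ s) := by
          gcongr with i hi
          exact hterm i
      _ = ((S.card : ℝ))⁻¹ * ((S.card : ℝ) * (2 * ε + β * M * Δ s)) := by
          rw [Finset.sum_const, nsmul_eq_mul]
      _ = 2 * ε + β * M * Δ s := by rw [← mul_assoc, inv_mul_cancel₀ hcard.ne', one_mul]
  refine ⟨key, ?_⟩
  rw [hΔ (s + 1)]
  exact Finset.sup'_le _ _ fun j _ => key j
end

section
/- (Convergence of FedLEASE) Let clients be indexed by Fin N and clusters by Fin M with a surjective cluster assignment c : Fin N → Fin M, let β ≥ 0 and ε ≥ 0 with β·M < 1, let each client i have a map φ_i : (Fin M → E) → E satisfying the bounded-expert-sensitivity condition, let θ : ℕ → Fin N → E be client parameter sequences whose local training is ε-accurate, and let Θ^t : Fin M → E be the induced cluster models. Then for every t ≥ 0, Δ^t ≤ 2ε/(1 − β·M) + (β·M)^t·Δ^0; in particular, for every cluster j, ‖Θ_j^{t+1} − Θ_j^t‖ ≤ 2ε/(1 − β·M) + (β·M)^t·max_k ‖Θ_k^1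 − Θ_k^0‖. -/
/-- **Convergence of FedLEASE.** With a surjective cluster assignment, bounded expert
sensitivity with `βM < 1`, and `ε`-accurate local training, the maximal round-to-round
change of the cluster models satisfies
`Δ^t ≤ 2ε/(1 - βM) + (βM)^t · Δ^0` for every `t`; in particular, for every cluster `j`,
`‖Θ_j^{t+1} - Θ_j^t‖ ≤ 2ε/(1 - βM) + (βM)^t · max_k ‖Θ_k^1 - Θ_k^0‖`. -/
theorem fedlease_convergence
    {E : Type*} [NormedAddCommGroup E] [NormedSpace ℝ E]
    (N M : ℕ) (hN : 0 < N) (hM : 0 < M)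
    (c : Fin N → Fin M) (hc : Function.Surjective c)
    (β ε : ℝ) (hβ : 0 ≤ β) (hε : 0 ≤ ε) (hβM : β * M < 1)
    (φ : Fin N → (Fin M → E) → E)
    (hφ : ∀ (i : Fin N) (Θ₁ Θ₂ : Fin M → E),
      ‖φ i Θ₁ - φ i Θ₂‖ ≤ β * ∑ k : Fin M, ‖Θ₁ k - Θ₂ k‖)
    (θ : ℕ → Fin N → E)
    (Θ : ℕ → Fin M → E)
    (hΘ : ∀ (t : ℕ) (j : Fin M),
      Θ t j = (((Finset.univ.filter (fun i => c i = j)).card : ℝ))⁻¹ •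
        ∑ i ∈ Finset.univ.filter (fun i => c i = j), θ t i)
    (hacc : ∀ (i : Fin N) (t : ℕ), ‖θ (t + 1) i - φ i (Θ t)‖ ≤ ε)
    (Δ : ℕ → ℝ)
    (hΔ : ∀ t : ℕ, Δ t = Finset.univ.sup' ⟨⟨0, hM⟩, Finset.mem_univ _⟩
      (fun j : Fin M => ‖Θ (t + 1) j - Θ t j‖)) :
    ∀ t : ℕ,
      Δ t ≤ 2 * ε / (1 - β * M) + (β * M) ^ t * Δ 0 ∧
      ∀ j : Fin M, ‖Θ (t + 1) j - Θ t j‖ ≤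
        2 * ε / (1 - β * M) + (β * M) ^ t *
          Finset.univ.sup' ⟨⟨0, hM⟩, Finset.mem_univ _⟩
            (fun k : Fin M => ‖Θ 1 k - Θ 0 k‖) := by

  have hr0 : (0:ℝ) ≤ β * M := by positivity
  have hden : 0 < 1 - β * M := by linarith
  have hA : 0 ≤ 2 * ε / (1 - β * M) := by positivity
  have hle : ∀ t (j : Fin M), ‖Θ (t + 1) j - Θ t j‖ ≤ Δ t := by
    intro t j
    rw [hΔ]
    exact Finset.le_sup' (fun k : Fin M => ‖Θ (t + 1) k - Θ t k‖) (Finset.mem_univ j)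
  have hΔnn : ∀ t, 0 ≤ Δ t := fun t => le_trans (norm_nonneg _) (hle t ⟨0, hM⟩)
  have step : ∀ t, Δ (t + 1) ≤ 2 * ε + β * M * Δ t := by
    intro t
    rw [hΔ]
    apply Finset.sup'_le
    intro j _
    obtain ⟨i₀, hi₀⟩ := hc j
    set S := Finset.univ.filter (fun i => c i = j) with hS
    have hSne : S.Nonempty := ⟨i₀, by simp [hS, hi₀]⟩
    have hcard : (0:ℝ) < (S.card : ℝ) := by exact_mod_cast Finset.card_pos.mpr hSne
    have hsumM : ∑ k : Fin M, ‖Θ (t + 1) k - Θ t k‖ ≤ M * Δ t := by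
      calc ∑ k : Fin M, ‖Θ (t + 1) k - Θ t k‖ ≤ ∑ _k : Fin M, Δ t :=
            Finset.sum_le_sum (fun k _ => hle t k)
        _ = M * Δ t := by simp [Finset.sum_const, mul_comm]
    have hterm : ∀ i ∈ S, ‖θ (t + 1 + 1) i - θ (t + 1) i‖ ≤ 2 * ε + β * M * Δ t := by
      intro i _
      have h1 := hacc i (t + 1)
      have h2 := hacc i t
      have h3 := hφ i (Θ (t + 1)) (Θ t)
      have htri : ‖θ (t + 1 + 1) i - θ (t + 1) i‖ ≤
          ‖θ (t + 1 + 1) i - φ i (Θ (t + 1))‖ + ‖φ i (Θ (t + 1)) - φ i (Θ t)‖ +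
            ‖φ i (Θ t) - θ (t + 1) i‖ := by
        have := dist_triangle4 (θ (t + 1 + 1) i) (φ i (Θ (t + 1))) (φ i (Θ t)) (θ (t + 1) i)
        simpa [dist_eq_norm] using this
      have h2' : ‖φ i (Θ t) - θ (t + 1) i‖ ≤ ε := by
        rw [norm_sub_rev]; exact h2
      have hφb : ‖φ i (Θ (t + 1)) - φ i (Θ t)‖ ≤ β * (M * Δ t) :=
        h3.trans (by nlinarith)
      nlinarith
    have hrep : Θ (t + 1 + 1) j - Θ (t + 1) j =
        ((S.card : ℝ))⁻¹ • ∑ i ∈ S, (θ (t + 1 + 1) i - θ (t + 1) i) := by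
      rw [hΘ, hΘ, ← smul_sub, ← Finset.sum_sub_distrib]
    rw [hrep, norm_smul]
    have hsumb : ‖∑ i ∈ S, (θ (t + 1 + 1) i - θ (t + 1) i)‖ ≤
        (S.card : ℝ) * (2 * ε + β * M * Δ t) := by
      calc ‖∑ i ∈ S, (θ (t + 1 + 1) i - θ (t + 1) i)‖
          ≤ ∑ i ∈ S, ‖θ (t + 1 + 1) i - θ (t + 1) i‖ := norm_sum_le _ _
        _ ≤ ∑ _i ∈ S, (2 * ε + β * M * Δ t) := Finset.sum_le_sum hterm
        _ = (S.card : ℝ) * (2 * ε + β * M * Δ t) := by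
            rw [Finset.sum_const, nsmul_eq_mul]
    have : ‖((S.card : ℝ))⁻¹‖ = ((S.card : ℝ))⁻¹ := by
      simp [abs_of_nonneg (le_of_lt hcard), Real.norm_eq_abs]
    rw [this]
    calc ((S.card : ℝ))⁻¹ * ‖∑ i ∈ S, (θ (t + 1 + 1) i - θ (t + 1) i)‖
        ≤ ((S.card : ℝ))⁻¹ * ((S.card : ℝ) * (2 * ε + β * M * Δ t)) := by
          apply mul_le_mul_of_nonneg_left hsumb
          positivity
      _ = 2 * ε + β * M * Δ t := by field_simp
  have main : ∀ t, Δ t ≤ 2 * ε / (1 - β * M) + (β * M) ^ t * Δ 0 := by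
    intro t
    induction t with
    | zero => simp; linarith [hA]
    | succ n ih =>
      have hkey : 2 * ε + β * M * (2 * ε / (1 - β * M) + (β * M) ^ n * Δ 0) =
          2 * ε / (1 - β * M) + (β * M) ^ (n + 1) * Δ 0 := by
        field_simp
        ring
      calc Δ (n + 1) ≤ 2 * ε + β * M * Δ n := step n
        _ ≤ 2 * ε + β * M * (2 * ε / (1 - β * M) + (β * M) ^ n * Δ 0) := by nlinarith
        _ = 2 * ε / (1 - β * M) + (β * M) ^ (n + 1) * Δ 0 := hkey
  intro t
  refine ⟨main t, fun j => ?_⟩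
  have := (hle t j).trans (main t)
  rwa [hΔ 0] at this
end

section
/- Let clients be indexed by Fin N and clusters by Fin M with a surjective cluster assignment c : Fin N → Fin M, let β ≥ 0 and ε ≥ 0 with β·M < 1, let each client i have a map φ_i : (Fin M → E) → E satisfying the bounded-expert-sensitivity condition, let θ : ℕ → Fin N → E be client parameter sequences whose local training is ε-accurate, and let Θ^t : Fin M → E be the induced cluster models. Then limsup_{t→∞} Δ^t ≤ 2ε/(1 − β·M), i.e., the maximum round-to-round change of the cluster models eventually stays within any neighborhood of 2ε/(1 − β·M). -/
/-- **Asymptotic stability of FedLEASE cluster models.** With a surjective cluster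
assignment, bounded expert sensitivity with `βM < 1`, and `ε`-accurate local training,
the maximal round-to-round change of the cluster models satisfies
`limsup_{t→∞} Δ^t ≤ 2ε/(1 - βM)`. -/
theorem fedlease_limsup_bound
    {E : Type*} [NormedAddCommGroup E] [NormedSpace ℝ E]
    (N M : ℕ) (hN : 0 < N) (hM : 0 < M)
    (c : Fin N → Fin M) (hc : Function.Surjective c)
    (β ε : ℝ) (hβ : 0 ≤ β) (hε : 0 ≤ ε) (hβM : β * M < 1)
    (φ : Fin N → (Fin M → E) → E)
    (hφ : ∀ (i : Fin N) (Θ₁ Θ₂ : Fin M → E),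
      ‖φ i Θ₁ - φ i Θ₂‖ ≤ β * ∑ k : Fin M, ‖Θ₁ k - Θ₂ k‖)
    (θ : ℕ → Fin N → E)
    (Θ : ℕ → Fin M → E)
    (hΘ : ∀ (t : ℕ) (j : Fin M),
      Θ t j = (((Finset.univ.filter (fun i => c i = j)).card : ℝ))⁻¹ •
        ∑ i ∈ Finset.univ.filter (fun i => c i = j), θ t i)
    (hacc : ∀ (i : Fin N) (t : ℕ), ‖θ (t + 1) i - φ i (Θ t)‖ ≤ ε)
    (Δ : ℕ → ℝ)
    (hΔ : ∀ t : ℕ, Δ t = Finset.univ.sup' ⟨⟨0, hM⟩, Finset.mem_univ _⟩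
      (fun j : Fin M => ‖Θ (t + 1) j - Θ t j‖)) :
    Filter.limsup Δ Filter.atTop ≤ 2 * ε / (1 - β * M) := by
  set q : ℝ := β * M with hq
  have hq0 : 0 ≤ q := mul_nonneg hβ (Nat.cast_nonneg M)
  have h1q : 0 < 1 - q := by linarith
  have hΔnn : ∀ t, 0 ≤ Δ t := by
    intro t
    rw [hΔ]
    exact le_trans (norm_nonneg _)
      (Finset.le_sup' (f := fun j : Fin M => ‖Θ (t + 1) j - Θ t j‖)
        (Finset.mem_univ (⟨0, hM⟩ : Fin M)))
  have hle : ∀ t j, ‖Θ (t + 1) j - Θ t j‖ ≤ Δ t := by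
    intro t j
    rw [hΔ]
    exact Finset.le_sup' (f := fun j : Fin M => ‖Θ (t + 1) j - Θ t j‖) (Finset.mem_univ j)
  have hsum : ∀ t, ∑ k : Fin M, ‖Θ (t + 1) k - Θ t k‖ ≤ M * Δ t := by
    intro t
    calc ∑ k : Fin M, ‖Θ (t + 1) k - Θ t k‖ ≤ ∑ _k : Fin M, Δ t :=
          Finset.sum_le_sum fun k _ => hle t k
      _ = M * Δ t := by simp [mul_comm]
  have hcl : ∀ (i : Fin N) (t : ℕ),
      ‖θ (t + 2) i - θ (t + 1) i‖ ≤ 2 * ε + q * Δ t := by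
    intro i t
    have h4 : ‖θ (t + 2) i - θ (t + 1) i‖ ≤
        ‖θ (t + 2) i - φ i (Θ (t + 1))‖ + ‖φ i (Θ (t + 1)) - φ i (Θ t)‖ +
          ‖φ i (Θ t) - θ (t + 1) i‖ := by
      have := dist_triangle4 (θ (t + 2) i) (φ i (Θ (t + 1))) (φ i (Θ t)) (θ (t + 1) i)
      simpa [dist_eq_norm] using this
    have h1 : ‖θ (t + 2) i - φ i (Θ (t + 1))‖ ≤ ε := hacc i (t + 1)
    have h2 : ‖φ i (Θ (t + 1)) - φ i (Θ t)‖ ≤ q * Δ t := by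
      calc ‖φ i (Θ (t + 1)) - φ i (Θ t)‖ ≤ β * ∑ k : Fin M, ‖Θ (t + 1) k - Θ t k‖ :=
            hφ i _ _
        _ ≤ β * (M * Δ t) := by
            exact mul_le_mul_of_nonneg_left (hsum t) hβ
        _ = q * Δ t := by ring
    have h3 : ‖φ i (Θ t) - θ (t + 1) i‖ ≤ ε := by
      rw [norm_sub_rev]; exact hacc i t
    linarith
  have hrec : ∀ t, Δ (t + 1) ≤ 2 * ε + q * Δ t := by
    intro t
    rw [hΔ (t + 1)]
    apply Finset.sup'_le
    intro j _
    set s := Finset.univ.filter (fun i => c i = j) with hs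
    have hcard : 0 < s.card := by
      obtain ⟨i, hi⟩ := hc j
      exact Finset.card_pos.mpr ⟨i, by simp [hs, hi]⟩
    have hcardR : (0 : ℝ) < (s.card : ℝ) := by exact_mod_cast hcard
    have hdiff : Θ (t + 2) j - Θ (t + 1) j =
        ((s.card : ℝ))⁻¹ • ∑ i ∈ s, (θ (t + 2) i - θ (t + 1) i) := by
      rw [hΘ (t + 2) j, hΘ (t + 1) j, ← hs, ← smul_sub, Finset.sum_sub_distrib]
    rw [show t + 1 + 1 = t + 2 from rfl, hdiff, norm_smul]
    have hns : ‖∑ i ∈ s, (θ (t + 2) i - θ (t + 1) i)‖ ≤ s.card * (2 * ε + q * Δ t) := by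
      calc ‖∑ i ∈ s, (θ (t + 2) i - θ (t + 1) i)‖ ≤
            ∑ i ∈ s, ‖θ (t + 2) i - θ (t + 1) i‖ := norm_sum_le _ _
        _ ≤ ∑ _i ∈ s, (2 * ε + q * Δ t) := Finset.sum_le_sum fun i _ => hcl i t
        _ = s.card * (2 * ε + q * Δ t) := by rw [Finset.sum_const, nsmul_eq_mul]
    have : ‖((s.card : ℝ))⁻¹‖ = ((s.card : ℝ))⁻¹ := by
      rw [Real.norm_eq_abs, abs_of_pos (inv_pos.mpr hcardR)]
    rw [this]
    calc ((s.card : ℝ))⁻¹ * ‖∑ i ∈ s, (θ (t + 2) i - θ (t + 1) i)‖ ≤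
          ((s.card : ℝ))⁻¹ * (s.card * (2 * ε + q * Δ t)) :=
        mul_le_mul_of_nonneg_left hns (inv_nonneg.mpr hcardR.le)
      _ = 2 * ε + q * Δ t := by field_simp
  have hbd : ∀ t, Δ t ≤ 2 * ε / (1 - q) + q ^ t * Δ 0 := by
    intro t
    induction t with
    | zero =>
      have : 0 ≤ 2 * ε / (1 - q) := div_nonneg (by linarith) h1q.le
      simpa using by linarith [hΔnn 0]
    | succ n ih =>
      calc Δ (n + 1) ≤ 2 * ε + q * Δ n := hrec n
        _ ≤ 2 * ε + q * (2 * ε / (1 - q) + q ^ n * Δ 0) := by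
            exact add_le_add (le_refl _) (mul_le_mul_of_nonneg_left ih hq0)
        _ = 2 * ε / (1 - q) + q ^ (n + 1) * Δ 0 := by
            field_simp
            ring
  have htend : Filter.Tendsto (fun t => 2 * ε / (1 - q) + q ^ t * Δ 0)
      Filter.atTop (nhds (2 * ε / (1 - q))) := by
    have h0 : Filter.Tendsto (fun t : ℕ => q ^ t) Filter.atTop (nhds 0) :=
      tendsto_pow_atTop_nhds_zero_of_lt_one hq0 (by linarith)
    have := (h0.mul_const (Δ 0)).const_add (2 * ε / (1 - q))
    simpa using this
  have hbound : Filter.IsBoundedUnder (· ≤ ·) Filter.atTop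
      (fun t => 2 * ε / (1 - q) + q ^ t * Δ 0) := htend.isBoundedUnder_le
  have hcob : Filter.IsCoboundedUnder (· ≤ ·) Filter.atTop Δ :=
    Filter.isCoboundedUnder_le_of_eventually_le Filter.atTop (x := 0)
      (Filter.Eventually.of_forall hΔnn)
  calc Filter.limsup Δ Filter.atTop ≤
        Filter.limsup (fun t => 2 * ε / (1 - q) + q ^ t * Δ 0) Filter.atTop :=
      Filter.limsup_le_limsup (Filter.Eventually.of_forall hbd) hcob hbound
    _ = 2 * ε / (1 - q) := htend.limsup_eq
end
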